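/- Let F be a symmetric fourth-order tensor on ℝⁿ with multilinear form F⁴ and suppose the score function S⁴(x) = F⁴(x,x,x,x) is convex on ℝⁿ. Then for any nonempty compact set D ⊂ ℝⁿ: max_{x∈D} F⁴(x,x,x,x) = max_{x,y∈D} F⁴(x,x,y,y) = max_{x,y,z,t∈D} F⁴(x,y,z,t). -/

import Mathlib

/-!
Convexity of the score `S x = F⁴(x,x,x,x)` makes each form `(x, y) ↦ F⁴(x,y,v,v)` positive
semidefinite: the midpoint inequality for `S` at `r • u` in direction `v` reads
`0 ≤ 12 r² F⁴(u,u,v,v) + 2 S v` for every real `r`. Consequently `F⁴(x+y,x+y,x-y,x-y) ≥ 0` gives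
`2 F⁴(x,x,y,y) ≤ S x + S y`. Polarizing in the last two arguments,
`4 F⁴(x,y,z,t) = F⁴(x,y,z+t,z+t) - F⁴(x,y,z-t,z-t)`, and the Cauchy–Schwarz bound for these
semidefinite forms together with the parallelogram law yields
`4 F⁴(x,y,z,t) ≤ S x + S y + S z + S t`. So every value of `F⁴` on `D` is dominated by a value of
`S` on `D`, and the three suprema coincide.
-/

/-- A fourth-order tensor is symmetric if its entries are invariant under any
permutation of the indices. -/
def Sym4 {n : ℕ} (F : Fin n → Fin n → Fin n → Fin n → ℝ) : Prop :=
  ∀ (σ : Equiv.Perm (Fin 4)) (v : Fin 4 → Fin n),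
    F (v (σ 0)) (v (σ 1)) (v (σ 2)) (v (σ 3)) = F (v 0) (v 1) (v 2) (v 3)

/-- The multilinear form associated to a fourth-order tensor. -/
def mform4 {n : ℕ} (F : Fin n → Fin n → Fin n → Fin n → ℝ)
    (x y z t : Fin n → ℝ) : ℝ :=
  ∑ i, ∑ j, ∑ k, ∑ l, F i j k l * x i * y j * z k * t l

namespace mform4
variable {n : ℕ} {F : Fin n → Fin n → Fin n → Fin n → ℝ}

lemma add₁ (x x' y z t : Fin n → ℝ) :
    mform4 F (x + x') y z t = mform4 F x y z t + mform4 F x' y z t := by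
  simp only [mform4, Pi.add_apply, mul_add, add_mul, Finset.sum_add_distrib]

lemma add₂ (x y y' z t : Fin n → ℝ) :
    mform4 F x (y + y') z t = mform4 F x y z t + mform4 F x y' z t := by
  simp only [mform4, Pi.add_apply, mul_add, add_mul, Finset.sum_add_distrib]

lemma add₃ (x y z z' t : Fin n → ℝ) :
    mform4 F x y (z + z') t = mform4 F x y z t + mform4 F x y z' t := by
  simp only [mform4, Pi.add_apply, mul_add, add_mul, Finset.sum_add_distrib]

lemma add₄ (x y z t t' : Fin n → ℝ) :
    mform4 F x y z (t + t') = mform4 F x y z t + mform4 F x y z t' := by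
  simp only [mform4, Pi.add_apply, mul_add, Finset.sum_add_distrib]

lemma sub₁ (x x' y z t : Fin n → ℝ) :
    mform4 F (x - x') y z t = mform4 F x y z t - mform4 F x' y z t := by
  simp only [mform4, Pi.sub_apply, mul_sub, sub_mul, Finset.sum_sub_distrib]

lemma sub₂ (x y y' z t : Fin n → ℝ) :
    mform4 F x (y - y') z t = mform4 F x y z t - mform4 F x y' z t := by
  simp only [mform4, Pi.sub_apply, mul_sub, sub_mul, Finset.sum_sub_distrib]

lemma sub₃ (x y z z' t : Fin n → ℝ) :
    mform4 F x y (z - z') t = mform4 F x y z t - mform4 F x y z' t := by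
  simp only [mform4, Pi.sub_apply, mul_sub, sub_mul, Finset.sum_sub_distrib]

lemma sub₄ (x y z t t' : Fin n → ℝ) :
    mform4 F x y z (t - t') = mform4 F x y z t - mform4 F x y z t' := by
  simp only [mform4, Pi.sub_apply, mul_sub, Finset.sum_sub_distrib]

lemma smul₁ (c : ℝ) (x y z t : Fin n → ℝ) :
    mform4 F (c • x) y z t = c * mform4 F x y z t := by
  simp only [mform4, Pi.smul_apply, smul_eq_mul, Finset.mul_sum, mul_assoc, mul_left_comm]

lemma smul₂ (c : ℝ) (x y z t : Fin n → ℝ) :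
    mform4 F x (c • y) z t = c * mform4 F x y z t := by
  simp only [mform4, Pi.smul_apply, smul_eq_mul, Finset.mul_sum, mul_assoc, mul_left_comm]

lemma parallelogram₃₄ (x y z t : Fin n → ℝ) :
    mform4 F x y (z + t) (z + t) + mform4 F x y (z - t) (z - t) =
      2 * mform4 F x y z z + 2 * mform4 F x y t t := by
  simp only [add₃, add₄, sub₃, sub₄]
  ring

end mform4

namespace Sym4
variable {n : ℕ} {F : Fin n → Fin n → Fin n → Fin n → ℝ}

lemma apply_swap₁₂ (hF : Sym4 F) (i j k l : Fin n) : F j i k l = F i j k l := by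
  simpa [Equiv.swap_apply_def] using hF (Equiv.swap 0 1) ![i, j, k, l]

lemma apply_swap₂₃ (hF : Sym4 F) (i j k l : Fin n) : F i k j l = F i j k l := by
  simpa [Equiv.swap_apply_def] using hF (Equiv.swap 1 2) ![i, j, k, l]

lemma apply_swap₃₄ (hF : Sym4 F) (i j k l : Fin n) : F i j l k = F i j k l := by
  simpa [Equiv.swap_apply_def] using hF (Equiv.swap 2 3) ![i, j, k, l]

lemma mform4_swap₁₂ (hF : Sym4 F) (x y z t : Fin n → ℝ) :
    mform4 F y x z t = mform4 F x y z t := by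
  rw [mform4, Finset.sum_comm]
  simp only [mform4, hF.apply_swap₁₂, mul_assoc, mul_left_comm]

lemma mform4_swap₂₃ (hF : Sym4 F) (x y z t : Fin n → ℝ) :
    mform4 F x z y t = mform4 F x y z t := by
  simp only [mform4]
  refine Finset.sum_congr rfl fun i _ => ?_
  rw [Finset.sum_comm]
  simp only [hF.apply_swap₂₃, mul_assoc, mul_left_comm]

lemma mform4_swap₃₄ (hF : Sym4 F) (x y z t : Fin n → ℝ) :
    mform4 F x y t z = mform4 F x y z t := by
  simp only [mform4]
  refine Finset.sum_congr rfl fun i _ => Finset.sum_congr rfl fun j _ => ?_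
  rw [Finset.sum_comm]
  simp only [hF.apply_swap₃₄, mul_comm, mul_left_comm]

lemma mform4_add_add_mform4_sub (hF : Sym4 F) (u w : Fin n → ℝ) :
    mform4 F (u + w) (u + w) (u + w) (u + w) + mform4 F (u - w) (u - w) (u - w) (u - w) =
      2 * mform4 F u u u u + 12 * mform4 F u u w w + 2 * mform4 F w w w w := by
  simp only [mform4.add₁, mform4.add₂, mform4.add₃, mform4.add₄, mform4.sub₁, mform4.sub₂,
    mform4.sub₃, mform4.sub₄, hF.mform4_swap₁₂ u w, hF.mform4_swap₂₃ _ u w,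
    hF.mform4_swap₃₄ _ _ u w]
  ring

lemma mform4_add_add_sub_sub (hF : Sym4 F) (x y : Fin n → ℝ) :
    mform4 F (x + y) (x + y) (x - y) (x - y) =
      mform4 F x x x x + mform4 F y y y y - 2 * mform4 F x x y y := by
  simp only [mform4.add₁, mform4.add₂, mform4.sub₃, mform4.sub₄, hF.mform4_swap₁₂ x y,
    hF.mform4_swap₂₃ _ x y, hF.mform4_swap₃₄ _ _ x y]
  ring

lemma four_mul_mform4_eq (hF : Sym4 F) (x y z t : Fin n → ℝ) :
    4 * mform4 F x y z t = mform4 F x y (z + t) (z + t) - mform4 F x y (z - t) (z - t) := by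
  simp only [mform4.add₃, mform4.add₄, mform4.sub₃, mform4.sub₄, hF.mform4_swap₃₄ x y z t]
  ring

end Sym4

lemma ConvexOn.two_mul_le_add_sub {E : Type*} [AddCommGroup E] [Module ℝ E] {f : E → ℝ}
    (hf : ConvexOn ℝ Set.univ f) (u w : E) : 2 * f u ≤ f (u + w) + f (u - w) := by
  have h := hf.2 (Set.mem_univ (u + w)) (Set.mem_univ (u - w)) (by norm_num : (0 : ℝ) ≤ 1 / 2)
    (by norm_num : (0 : ℝ) ≤ 1 / 2) (by norm_num)
  rw [show (1 / 2 : ℝ) • (u + w) + (1 / 2 : ℝ) • (u - w) = u by module] at h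
  simp only [smul_eq_mul] at h
  linarith

lemma nonneg_of_forall_sq_mul_add_nonneg {c e : ℝ} (h : ∀ r : ℝ, 0 ≤ r ^ 2 * c + e) : 0 ≤ c := by
  by_contra! hc
  set r := (|e| + 1) / -c + 1
  have hrc : r * c = c - (|e| + 1) := by
    simp only [r]
    field_simp [hc.ne]
    ring
  have hr : 1 ≤ r := le_add_of_nonneg_left (div_nonneg (by positivity) (by linarith))
  have hrc_nonpos : r * c ≤ 0 := by
    rw [hrc]
    linarith [abs_nonneg e]
  nlinarith [h r, le_abs_self e, mul_le_mul_of_nonpos_right hr hrc_nonpos]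

section Convex

variable {n : ℕ} {F : Fin n → Fin n → Fin n → Fin n → ℝ}

lemma mform4_nonneg_of_convexOn (hF : Sym4 F)
    (hconv : ConvexOn ℝ Set.univ (fun x : Fin n → ℝ => mform4 F x x x x)) (u v : Fin n → ℝ) :
    0 ≤ mform4 F u u v v := by
  suffices 0 ≤ 12 * mform4 F u u v v by linarith
  refine nonneg_of_forall_sq_mul_add_nonneg (e := 2 * mform4 F v v v v) fun r => ?_
  have h := hconv.two_mul_le_add_sub (r • u) v
  simp only [hF.mform4_add_add_mform4_sub, mform4.smul₁, mform4.smul₂] at h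
  linarith

lemma two_mul_mform4_le_of_convexOn (hF : Sym4 F)
    (hconv : ConvexOn ℝ Set.univ (fun x : Fin n → ℝ => mform4 F x x x x)) (x y : Fin n → ℝ) :
    2 * mform4 F x x y y ≤ mform4 F x x x x + mform4 F y y y y := by
  have h := mform4_nonneg_of_convexOn hF hconv (x + y) (x - y)
  rw [hF.mform4_add_add_sub_sub] at h
  linarith

lemma abs_two_mul_mform4_le_of_convexOn (hF : Sym4 F)
    (hconv : ConvexOn ℝ Set.univ (fun x : Fin n → ℝ => mform4 F x x x x)) (x y v : Fin n → ℝ) :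
    |2 * mform4 F x y v v| ≤ mform4 F x x v v + mform4 F y y v v := by
  have hadd := mform4_nonneg_of_convexOn hF hconv (x + y) v
  have hsub := mform4_nonneg_of_convexOn hF hconv (x - y) v
  simp only [mform4.add₁, mform4.add₂, mform4.sub₁, mform4.sub₂, hF.mform4_swap₁₂ x y]
    at hadd hsub
  exact abs_le.2 ⟨by linarith, by linarith⟩

lemma four_mul_mform4_le_of_convexOn (hF : Sym4 F)
    (hconv : ConvexOn ℝ Set.univ (fun x : Fin n → ℝ => mform4 F x x x x)) (x y z t : Fin n → ℝ) :
    4 * mform4 F x y z t ≤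
      mform4 F x x x x + mform4 F y y y y + mform4 F z z z z + mform4 F t t t t := by
  have hplus := (abs_le.1 (abs_two_mul_mform4_le_of_convexOn hF hconv x y (z + t))).2
  have hminus := (abs_le.1 (abs_two_mul_mform4_le_of_convexOn hF hconv x y (z - t))).1
  linarith [hF.four_mul_mform4_eq x y z t,
    mform4.parallelogram₃₄ (F := F) x x z t, mform4.parallelogram₃₄ (F := F) y y z t,
    two_mul_mform4_le_of_convexOn hF hconv x z, two_mul_mform4_le_of_convexOn hF hconv x t,
    two_mul_mform4_le_of_convexOn hF hconv y z, two_mul_mform4_le_of_convexOn hF hconv y t]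

end Convex

theorem stmt_8_general {n : ℕ} (F : Fin n → Fin n → Fin n → Fin n → ℝ) (hF : Sym4 F)
    (hconv : ConvexOn ℝ Set.univ (fun x : Fin n → ℝ => mform4 F x x x x))
    (D : Set (Fin n → ℝ)) :
    sSup {r : ℝ | ∃ x ∈ D, r = mform4 F x x x x} =
        sSup {r : ℝ | ∃ x ∈ D, ∃ y ∈ D, r = mform4 F x x y y} ∧
      sSup {r : ℝ | ∃ x ∈ D, r = mform4 F x x x x} =
        sSup {r : ℝ | ∃ x ∈ D, ∃ y ∈ D, ∃ z ∈ D, ∃ t ∈ D, r = mform4 F x y z t} := by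
  refine ⟨csSup_eq_csSup_of_forall_exists_le ?_ ?_, csSup_eq_csSup_of_forall_exists_le ?_ ?_⟩
  · rintro _ ⟨x, hx, rfl⟩
    exact ⟨_, ⟨x, hx, x, hx, rfl⟩, le_rfl⟩
  · rintro _ ⟨x, hx, y, hy, rfl⟩
    by_contra! h
    linarith [h _ ⟨x, hx, rfl⟩, h _ ⟨y, hy, rfl⟩, two_mul_mform4_le_of_convexOn hF hconv x y]
  · rintro _ ⟨x, hx, rfl⟩
    exact ⟨_, ⟨x, hx, x, hx, x, hx, x, hx, rfl⟩, le_rfl⟩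
  · rintro _ ⟨x, hx, y, hy, z, hz, t, ht, rfl⟩
    by_contra! h
    linarith [h _ ⟨x, hx, rfl⟩, h _ ⟨y, hy, rfl⟩, h _ ⟨z, hz, rfl⟩, h _ ⟨t, ht, rfl⟩,
      four_mul_mform4_le_of_convexOn hF hconv x y z t]

/-- If the score function of a symmetric fourth-order tensor is convex, then for any
nonempty compact set `D`, the maximum of the score over `D` equals the maximum of the
multilinear form over `D × D` (two arguments paired) and over `D⁴`. -/
theorem stmt_8 {n : ℕ} (F : Fin n → Fin n → Fin n → Fin n → ℝ) (hF : Sym4 F)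
    (hconv : ConvexOn ℝ Set.univ (fun x : Fin n → ℝ => mform4 F x x x x))
    (D : Set (Fin n → ℝ)) (hD : IsCompact D) (hne : D.Nonempty) :
    sSup {r : ℝ | ∃ x ∈ D, r = mform4 F x x x x} =
        sSup {r : ℝ | ∃ x ∈ D, ∃ y ∈ D, r = mform4 F x x y y} ∧
      sSup {r : ℝ | ∃ x ∈ D, r = mform4 F x x x x} =
        sSup {r : ℝ | ∃ x ∈ D, ∃ y ∈ D, ∃ z ∈ D, ∃ t ∈ D, r = mform4 F x y z t} :=
  stmt_8_general F hF hconv D
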